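/- arXiv:2311.09408 — 2 statements merged into one kernel-verified Lean document; each statement's English description precedes it below -/
import Mathlib

section
/- Assume m > c, let u* be the unique minimizer of Φ̃, y* = Hu* + d, and let (u_k) be generated by u_{k+1} = u_k − η F(u_k) with 0 < η < 2(m − c)/(L² − c²) and ρ = √(1 − 2mη + L²η²) + cη ∈ (0,1). Then limsup_{k→∞} ‖u_k − u*‖ ≤ η ‖(Hᵀ − H_diag) ∇Φ²(y*)‖ / (1 − ρ); in fact for every k ≥ 0, ‖u_k − u*‖ ≤ ρ^k ‖u₀ − u*‖ + η ‖(Hᵀ − H_diag) ∇Φ²(y*)‖ / (1 − ρ). -/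
open RealInnerProductSpace

/-- Largest singular value of a square matrix: the operator 2-norm of `v ↦ M v`
on Euclidean space. -/
noncomputable def sigmaMax {N : ℕ} (M : Matrix (Fin N) (Fin N) ℝ) : ℝ :=
  ‖Matrix.toEuclideanCLM (𝕜 := ℝ) M‖

/-- Smallest singular value of a square matrix: the infimum of `‖M v‖` over the
unit sphere of Euclidean space. -/
noncomputable def sigmaMin {N : ℕ} (M : Matrix (Fin N) (Fin N) ℝ) : ℝ :=
  sInf ((fun v : EuclideanSpace ℝ (Fin N) => ‖Matrix.toEuclideanCLM (𝕜 := ℝ) M v‖) '' {v | ‖v‖ = 1})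

/-- Matrix-vector multiplication as a map on Euclidean space. -/
noncomputable def mulV {N : ℕ} (M : Matrix (Fin N) (Fin N) ℝ) (v : EuclideanSpace ℝ (Fin N)) :
    EuclideanSpace ℝ (Fin N) :=
  Matrix.toEuclideanCLM (𝕜 := ℝ) M v


/-!
Write `F = G - R`, where `G u = ∇Φ¹ u + Hᵀ ∇Φ²(H u + d)` is the gradient of `Φ̃` and
`R u = (Hᵀ - H_diag) ∇Φ²(H u + d)`. Since `G` is `m`-strongly monotone and `L`-Lipschitz, the exact
gradient step is a `√(1 - 2mη + L²η²)`-contraction around the zero `u*` of `G`, while `R` is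
`c`-Lipschitz. Hence `eₖ = ‖uₖ - u*‖` obeys `eₖ₊₁ ≤ ρ eₖ + η ‖R u*‖`, and unrolling this linear
recursion gives the bound.
-/

section Matrix

variable {N : ℕ}

lemma toEuclideanCLM_transpose (M : Matrix (Fin N) (Fin N) ℝ) :
    Matrix.toEuclideanCLM (𝕜 := ℝ) M.transpose =
      ContinuousLinearMap.adjoint (Matrix.toEuclideanCLM (𝕜 := ℝ) M) := by
  rw [← Matrix.conjTranspose_eq_transpose_of_trivial]
  exact map_star _ M

lemma sigmaMax_transpose (M : Matrix (Fin N) (Fin N) ℝ) : sigmaMax M.transpose = sigmaMax M := by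
  rw [sigmaMax, sigmaMax, toEuclideanCLM_transpose, ContinuousLinearMap.adjoint.norm_map]

lemma sigmaMin_nonneg (M : Matrix (Fin N) (Fin N) ℝ) : 0 ≤ sigmaMin M :=
  Real.sInf_nonneg (by rintro _ ⟨v, -, rfl⟩; exact norm_nonneg _)

lemma sigmaMin_mul_norm_le (M : Matrix (Fin N) (Fin N) ℝ) (v : EuclideanSpace ℝ (Fin N)) :
    sigmaMin M * ‖v‖ ≤ ‖Matrix.toEuclideanCLM (𝕜 := ℝ) M v‖ := by
  rcases eq_or_ne v 0 with rfl | hv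
  · simp
  have hv' : 0 < ‖v‖ := norm_pos_iff.mpr hv
  have hunit : sigmaMin M ≤ ‖Matrix.toEuclideanCLM (𝕜 := ℝ) M (‖v‖⁻¹ • v)‖ :=
    csInf_le ⟨0, by rintro _ ⟨w, -, rfl⟩; exact norm_nonneg _⟩
      ⟨‖v‖⁻¹ • v, by simp [norm_smul, hv'.ne'], rfl⟩
  rwa [map_smul, norm_smul, norm_inv, norm_norm, le_inv_mul_iff₀ hv', mul_comm] at hunit

end Matrix

section Normed

variable {E F G W : Type*} [SeminormedAddCommGroup E] [NormedSpace ℝ E]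
  [SeminormedAddCommGroup F] [NormedSpace ℝ F] [SeminormedAddCommGroup G] [NormedSpace ℝ G]
  [SeminormedAddCommGroup W] [NormedSpace ℝ W]

lemma norm_comp_comp_affine_sub_le (T : E →L[ℝ] F) (d : F) {g : F → G} (A : G →L[ℝ] W) {K : ℝ}
    (hK : 0 ≤ K) (hg : ∀ a b, ‖g a - g b‖ ≤ K * ‖a - b‖) (a b : E) :
    ‖A (g (T a + d)) - A (g (T b + d))‖ ≤ ‖A‖ * ‖T‖ * K * ‖a - b‖ := by
  calc _ ≤ ‖A‖ * ‖g (T a + d) - g (T b + d)‖ := by rw [← map_sub]; exact A.le_opNorm _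
    _ ≤ ‖A‖ * (K * ‖T (a - b)‖) := by
        gcongr; simpa only [add_sub_add_right_eq_sub, map_sub] using hg (T a + d) (T b + d)
    _ ≤ ‖A‖ * (K * (‖T‖ * ‖a - b‖)) := by gcongr; exact T.le_opNorm _
    _ = ‖A‖ * ‖T‖ * K * ‖a - b‖ := by ring

end Normed

section Composite

variable {E F : Type*} [NormedAddCommGroup E] [InnerProductSpace ℝ E]
  [NormedAddCommGroup F] [InnerProductSpace ℝ F] [CompleteSpace E] [CompleteSpace F]

lemma IsLocalMin.hasGradientAt_eq_zero {f : E → ℝ} {g x : E} (hmin : IsLocalMin f x)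
    (hf : HasGradientAt f g x) : g = 0 :=
  (InnerProductSpace.toDual ℝ E).map_eq_zero_iff.mp (hmin.hasFDerivAt_eq_zero hf.hasFDerivAt)

lemma HasGradientAt.add_comp_affine {f₁ : E → ℝ} {f₂ : F → ℝ} {g₁ : E} {g₂ : F} {x : E}
    (T : E →L[ℝ] F) (d : F) (h₁ : HasGradientAt f₁ g₁ x) (h₂ : HasGradientAt f₂ g₂ (T x + d)) :
    HasGradientAt (fun u => f₁ u + f₂ (T u + d)) (g₁ + ContinuousLinearMap.adjoint T g₂) x := by
  rw [hasGradientAt_iff_hasFDerivAt] at *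
  have hdual : InnerProductSpace.toDual ℝ E (g₁ + ContinuousLinearMap.adjoint T g₂) =
      InnerProductSpace.toDual ℝ E g₁ + (InnerProductSpace.toDual ℝ F g₂).comp T := by
    ext v
    simp [ContinuousLinearMap.adjoint_inner_left]
  rw [hdual]
  exact h₁.add (h₂.comp x (T.hasFDerivAt.add_const d))

variable (T : E →L[ℝ] F) (d : F) {g₁ : E → E} {g₂ : F → F}

lemma strongMonotone_add_adjoint_comp_affine {m₁ m₂ s : ℝ} (hm₂ : 0 ≤ m₂) (hs : 0 ≤ s)
    (hT : ∀ x, s * ‖x‖ ≤ ‖T x‖)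
    (h₁ : ∀ a b, m₁ * ‖a - b‖ ^ 2 ≤ ⟪g₁ a - g₁ b, a - b⟫)
    (h₂ : ∀ a b, m₂ * ‖a - b‖ ^ 2 ≤ ⟪g₂ a - g₂ b, a - b⟫) (a b : E) :
    (m₁ + s ^ 2 * m₂) * ‖a - b‖ ^ 2 ≤
      ⟪(g₁ a + ContinuousLinearMap.adjoint T (g₂ (T a + d))) -
        (g₁ b + ContinuousLinearMap.adjoint T (g₂ (T b + d))), a - b⟫ := by
  have hsplit : ⟪(g₁ a + ContinuousLinearMap.adjoint T (g₂ (T a + d))) -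
        (g₁ b + ContinuousLinearMap.adjoint T (g₂ (T b + d))), a - b⟫ =
      ⟪g₁ a - g₁ b, a - b⟫ + ⟪g₂ (T a + d) - g₂ (T b + d), (T a + d) - (T b + d)⟫ := by
    rw [add_sub_add_comm, ← map_sub, inner_add_left, ContinuousLinearMap.adjoint_inner_left,
      add_sub_add_right_eq_sub, map_sub]
  have hT' : s ^ 2 * ‖a - b‖ ^ 2 ≤ ‖(T a + d) - (T b + d)‖ ^ 2 := by
    rw [add_sub_add_right_eq_sub, ← map_sub, ← mul_pow]
    exact pow_le_pow_left₀ (by positivity) (hT _) 2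
  nlinarith [h₁ a b, h₂ (T a + d) (T b + d), mul_le_mul_of_nonneg_left hT' hm₂]

lemma lipschitz_add_adjoint_comp_affine {L₁ L₂ : ℝ} (hL₂ : 0 ≤ L₂)
    (h₁ : ∀ a b, ‖g₁ a - g₁ b‖ ≤ L₁ * ‖a - b‖) (h₂ : ∀ a b, ‖g₂ a - g₂ b‖ ≤ L₂ * ‖a - b‖)
    (a b : E) :
    ‖(g₁ a + ContinuousLinearMap.adjoint T (g₂ (T a + d))) -
        (g₁ b + ContinuousLinearMap.adjoint T (g₂ (T b + d)))‖ ≤ (L₁ + ‖T‖ ^ 2 * L₂) * ‖a - b‖ := by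
  have h₂' := norm_comp_comp_affine_sub_le T d (ContinuousLinearMap.adjoint T) hL₂ h₂ a b
  rw [ContinuousLinearMap.adjoint.norm_map] at h₂'
  calc _ ≤ ‖g₁ a - g₁ b‖ + ‖ContinuousLinearMap.adjoint T (g₂ (T a + d)) -
        ContinuousLinearMap.adjoint T (g₂ (T b + d))‖ := by
        rw [add_sub_add_comm]; exact norm_add_le _ _
    _ ≤ (L₁ + ‖T‖ ^ 2 * L₂) * ‖a - b‖ := by nlinarith [h₁ a b]

end Composite

section GradientStep

variable {E : Type*} [NormedAddCommGroup E] [InnerProductSpace ℝ E] {G R : E → E} {m L η : ℝ}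

lemma norm_gradientStep_sub_le (hη : 0 ≤ η) {a b : E}
    (hmono : m * ‖a - b‖ ^ 2 ≤ ⟪G a - G b, a - b⟫) (hlip : ‖G a - G b‖ ≤ L * ‖a - b‖) :
    ‖(a - η • G a) - (b - η • G b)‖ ≤ √(1 - 2 * m * η + L ^ 2 * η ^ 2) * ‖a - b‖ := by
  have hlip_sq : ‖G a - G b‖ ^ 2 ≤ L ^ 2 * ‖a - b‖ ^ 2 := by
    rw [← mul_pow]; exact pow_le_pow_left₀ (norm_nonneg _) hlip 2
  have hsq : ‖(a - η • G a) - (b - η • G b)‖ ^ 2 ≤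
      (1 - 2 * m * η + L ^ 2 * η ^ 2) * ‖a - b‖ ^ 2 := by
    rw [sub_sub_sub_comm, ← smul_sub, norm_sub_sq_real, real_inner_smul_right, norm_smul,
      Real.norm_eq_abs, mul_pow, sq_abs, real_inner_comm]
    nlinarith [mul_le_mul_of_nonneg_left hmono hη, mul_le_mul_of_nonneg_left hlip_sq (sq_nonneg η)]
  calc _ = √(‖(a - η • G a) - (b - η • G b)‖ ^ 2) := (Real.sqrt_sq (norm_nonneg _)).symm
    _ ≤ √((1 - 2 * m * η + L ^ 2 * η ^ 2) * ‖a - b‖ ^ 2) := Real.sqrt_le_sqrt hsq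
    _ = _ := by rw [Real.sqrt_mul' _ (sq_nonneg _), Real.sqrt_sq (norm_nonneg _)]

lemma norm_perturbedGradientStep_sub_le (hη : 0 ≤ η) {c : ℝ} {x xstar : E} (hG : G xstar = 0)
    (hmono : m * ‖x - xstar‖ ^ 2 ≤ ⟪G x - G xstar, x - xstar⟫)
    (hlip : ‖G x - G xstar‖ ≤ L * ‖x - xstar‖) (hR : ‖R x - R xstar‖ ≤ c * ‖x - xstar‖) :
    ‖x - η • (G x - R x) - xstar‖ ≤
      (√(1 - 2 * m * η + L ^ 2 * η ^ 2) + c * η) * ‖x - xstar‖ + η * ‖R xstar‖ := by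
  have hsplit : x - η • (G x - R x) - xstar =
      ((x - η • G x) - (xstar - η • G xstar)) + η • (R x - R xstar) + η • R xstar := by
    rw [hG]; simp only [smul_sub, smul_zero]; abel
  rw [hsplit]
  refine (norm_add₃_le ..).trans ?_
  rw [norm_smul, norm_smul, Real.norm_of_nonneg hη]
  nlinarith [norm_gradientStep_sub_le hη hmono hlip, mul_le_mul_of_nonneg_left hR hη]

end GradientStep

section Recursion

variable {x : ℕ → ℝ} {ρ β : ℝ}

lemma le_pow_mul_add_div_of_le_mul_add (hρ₀ : 0 ≤ ρ) (hρ₁ : ρ < 1) (hβ : 0 ≤ β)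
    (h : ∀ k, x (k + 1) ≤ ρ * x k + β) (k : ℕ) : x k ≤ ρ ^ k * x 0 + β / (1 - ρ) := by
  have hρ' : 0 < 1 - ρ := sub_pos.mpr hρ₁
  induction k with
  | zero => simpa using div_nonneg hβ hρ'.le
  | succ k ih =>
    have hfix : ρ * (β / (1 - ρ)) + β = β / (1 - ρ) := by field_simp; ring
    calc x (k + 1) ≤ ρ * (ρ ^ k * x 0 + β / (1 - ρ)) + β := (h k).trans (by gcongr)
      _ = ρ ^ (k + 1) * x 0 + β / (1 - ρ) := by rw [mul_add, add_assoc, hfix]; ring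

lemma limsup_le_of_le_pow_mul_add (hx : ∀ k, 0 ≤ x k) (hρ₀ : 0 ≤ ρ) (hρ₁ : ρ < 1)
    (h : ∀ k, x k ≤ ρ ^ k * x 0 + β) : Filter.limsup x Filter.atTop ≤ β := by
  have hlim : Filter.Tendsto (fun k => ρ ^ k * x 0 + β) Filter.atTop (nhds β) := by
    simpa using ((tendsto_pow_atTop_nhds_zero_of_lt_one hρ₀ hρ₁).mul_const (x 0)).add_const β
  rw [← hlim.limsup_eq]
  exact Filter.limsup_le_limsup (Filter.Eventually.of_forall h)
    (Filter.isCoboundedUnder_le_of_le Filter.atTop hx) hlim.isBoundedUnder_le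

end Recursion

theorem stmt6_general {N : ℕ}
(H : Matrix (Fin N) (Fin N) ℝ) (d : EuclideanSpace ℝ (Fin N))
    (Φ1 Φ2 : EuclideanSpace ℝ (Fin N) → ℝ)
    (mu Lu my Ly : ℝ)
    (hmy : 0 < my) (hmyLy : my ≤ Ly)
    (hΦ1diff : Differentiable ℝ Φ1) (hΦ2diff : Differentiable ℝ Φ2)
    (hΦ1mono : ∀ a b, mu * ‖a - b‖ ^ 2 ≤ ⟪gradient Φ1 a - gradient Φ1 b, a - b⟫)
    (hΦ1lip : ∀ a b, ‖gradient Φ1 a - gradient Φ1 b‖ ≤ Lu * ‖a - b‖)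
    (hΦ2mono : ∀ a b, my * ‖a - b‖ ^ 2 ≤ ⟪gradient Φ2 a - gradient Φ2 b, a - b⟫)
    (hΦ2lip : ∀ a b, ‖gradient Φ2 a - gradient Φ2 b‖ ≤ Ly * ‖a - b‖)
    (Hdiag : Matrix (Fin N) (Fin N) ℝ)
    (hHdiag : Hdiag = Matrix.diagonal (fun i => H i i))
    (F : EuclideanSpace ℝ (Fin N) → EuclideanSpace ℝ (Fin N))
    (hF : ∀ u, F u = gradient Φ1 u + mulV Hdiag (gradient Φ2 (mulV H u + d)))
    (m c L : ℝ)
    (hm : m = mu + sigmaMin H ^ 2 * my)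
    (hc : c = sigmaMax (H - Hdiag) * sigmaMax H * Ly)
    (hL : L = Lu + sigmaMax H ^ 2 * Ly)
    (ustar ystar : EuclideanSpace ℝ (Fin N))
    (hustar : ∀ u, Φ1 ustar + Φ2 (mulV H ustar + d) ≤ Φ1 u + Φ2 (mulV H u + d))
    (hystar : ystar = mulV H ustar + d)
    (η : ℝ) (hη0 : 0 < η)
    (ρ : ℝ) (hρ : ρ = Real.sqrt (1 - 2 * m * η + L ^ 2 * η ^ 2) + c * η)
    (hρ0 : 0 < ρ) (hρ1 : ρ < 1)
    (u : ℕ → EuclideanSpace ℝ (Fin N))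
    (hiter : ∀ k, u (k + 1) = u k - η • F (u k)) :
    (∀ k : ℕ,
      ‖u k - ustar‖ ≤
        ρ ^ k * ‖u 0 - ustar‖ +
          η * ‖mulV (H.transpose - Hdiag) (gradient Φ2 ystar)‖ / (1 - ρ)) ∧
      Filter.limsup (fun k : ℕ => ‖u k - ustar‖) Filter.atTop ≤
        η * ‖mulV (H.transpose - Hdiag) (gradient Φ2 ystar)‖ / (1 - ρ) := by
  set T := Matrix.toEuclideanCLM (𝕜 := ℝ) H with hT
  set A := Matrix.toEuclideanCLM (𝕜 := ℝ) (H.transpose - Hdiag)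
  set G := fun v => gradient Φ1 v + ContinuousLinearMap.adjoint T (gradient Φ2 (T v + d))
  set R := fun v => A (gradient Φ2 (T v + d))
  have hLy : 0 ≤ Ly := hmy.le.trans hmyLy
  have hFGR : ∀ v, F v = G v - R v := fun v => by
    simp only [hF, G, R, A, mulV, map_sub, toEuclideanCLM_transpose, ← hT, sub_apply]
    abel
  have hGstar : G ustar = 0 :=
    IsLocalMin.hasGradientAt_eq_zero (Filter.Eventually.of_forall hustar)
      ((hΦ1diff ustar).hasGradientAt.add_comp_affine T d (hΦ2diff _).hasGradientAt)
  have hA : ‖A‖ = sigmaMax (H - Hdiag) := by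
    have hPt : (H - Hdiag).transpose = H.transpose - Hdiag := by
      rw [Matrix.transpose_sub, hHdiag, Matrix.diagonal_transpose]
    rw [← sigmaMax_transpose, hPt]
    rfl
  have hstep : ∀ k, ‖u (k + 1) - ustar‖ ≤ ρ * ‖u k - ustar‖ + η * ‖R ustar‖ := fun k => by
    rw [hiter, hFGR, hρ, hm, hL, hc, ← hA]
    exact norm_perturbedGradientStep_sub_le hη0.le hGstar
      (strongMonotone_add_adjoint_comp_affine T d hmy.le (sigmaMin_nonneg H)
        (sigmaMin_mul_norm_le H) hΦ1mono hΦ2mono _ _)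
      (lipschitz_add_adjoint_comp_affine T d hLy hΦ1lip hΦ2lip _ _)
      (norm_comp_comp_affine_sub_le T d A hLy hΦ2lip _ _)
  have hbound := le_pow_mul_add_div_of_le_mul_add (x := fun k => ‖u k - ustar‖) hρ0.le hρ1
    (mul_nonneg hη0.le (norm_nonneg _)) hstep
  rw [hystar]
  exact ⟨hbound, limsup_le_of_le_pow_mul_add (fun k => norm_nonneg _) hρ0.le hρ1 hbound⟩

/-- asymptotic sub-optimality of the decentralized closed loop.
Under `m > c`, for `0 < η < 2(m−c)/(L²−c²)` with `ρ = √(1 − 2mη + L²η²) + cη ∈ (0,1)`,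
the iterates of `u_{k+1} = u_k − η F(u_k)` satisfy, for every `k`,
`‖u_k − u*‖ ≤ ρ^k ‖u₀ − u*‖ + η‖(Hᵀ − H_diag)∇Φ²(y*)‖/(1 − ρ)`; in particular
`limsup_k ‖u_k − u*‖ ≤ η‖(Hᵀ − H_diag)∇Φ²(y*)‖/(1 − ρ)`. -/
theorem stmt6 {N : ℕ} (hN : 0 < N)
(H : Matrix (Fin N) (Fin N) ℝ) (d : EuclideanSpace ℝ (Fin N))
    (Φ1 Φ2 : EuclideanSpace ℝ (Fin N) → ℝ)
    (mu Lu my Ly : ℝ)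
    (hmu : 0 < mu) (hmuLu : mu ≤ Lu) (hmy : 0 < my) (hmyLy : my ≤ Ly)
    (hΦ1diff : Differentiable ℝ Φ1) (hΦ2diff : Differentiable ℝ Φ2)
    (hΦ1mono : ∀ a b, mu * ‖a - b‖ ^ 2 ≤ ⟪gradient Φ1 a - gradient Φ1 b, a - b⟫)
    (hΦ1lip : ∀ a b, ‖gradient Φ1 a - gradient Φ1 b‖ ≤ Lu * ‖a - b‖)
    (hΦ2mono : ∀ a b, my * ‖a - b‖ ^ 2 ≤ ⟪gradient Φ2 a - gradient Φ2 b, a - b⟫)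
    (hΦ2lip : ∀ a b, ‖gradient Φ2 a - gradient Φ2 b‖ ≤ Ly * ‖a - b‖)
    (Hdiag : Matrix (Fin N) (Fin N) ℝ)
    (hHdiag : Hdiag = Matrix.diagonal (fun i => H i i))
    (F : EuclideanSpace ℝ (Fin N) → EuclideanSpace ℝ (Fin N))
    (hF : ∀ u, F u = gradient Φ1 u + mulV Hdiag (gradient Φ2 (mulV H u + d)))
    (m c L : ℝ)
    (hm : m = mu + sigmaMin H ^ 2 * my)
    (hc : c = sigmaMax (H - Hdiag) * sigmaMax H * Ly)
    (hL : L = Lu + sigmaMax H ^ 2 * Ly)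
    (hmc : m > c)
    (ustar ystar : EuclideanSpace ℝ (Fin N))
    (hustar : ∀ u, Φ1 ustar + Φ2 (mulV H ustar + d) ≤ Φ1 u + Φ2 (mulV H u + d))
    (hystar : ystar = mulV H ustar + d)
    (η : ℝ) (hη0 : 0 < η) (hη1 : η < 2 * (m - c) / (L ^ 2 - c ^ 2))
    (ρ : ℝ) (hρ : ρ = Real.sqrt (1 - 2 * m * η + L ^ 2 * η ^ 2) + c * η)
    (hρ0 : 0 < ρ) (hρ1 : ρ < 1)
    (u : ℕ → EuclideanSpace ℝ (Fin N))
    (hiter : ∀ k, u (k + 1) = u k - η • F (u k)) :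
    (∀ k : ℕ,
      ‖u k - ustar‖ ≤
        ρ ^ k * ‖u 0 - ustar‖ +
          η * ‖mulV (H.transpose - Hdiag) (gradient Φ2 ystar)‖ / (1 - ρ)) ∧
      Filter.limsup (fun k : ℕ => ‖u k - ustar‖) Filter.atTop ≤
        η * ‖mulV (H.transpose - Hdiag) (gradient Φ2 ystar)‖ / (1 - ρ) :=
  stmt6_general H d Φ1 Φ2 mu Lu my Ly hmy hmyLy hΦ1diff hΦ2diff hΦ1mono hΦ1lip hΦ2mono hΦ2lip Hdiag
    hHdiag F hF m c L hm hc hL ustar ystar hustar hystar η hη0 ρ hρ hρ0 hρ1 u hiter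
end

section
/- Assume m > c and let u∞ be the unique point with ∇Φ¹(u∞) + H_diag ∇Φ²(Hu∞ + d) = 0, and y∞ = Hu∞ + d. For any x, u ∈ ℝ^N, set y = C x + D u + d, φ₁ = ∇Φ¹(u) + H_diag ∇Φ²(y), and φ₂ = x − H_x u. Then φ₁ᵀ(u − u∞) ≥ m_u ‖u − u∞‖² + m_y ‖y − y∞‖² − L_y σ_max(H_diag − H) ‖y − y∞‖ ‖u − u∞‖ − L_y σ_max(C) ‖y − y∞‖ ‖φ₂‖. -/
open RealInnerProductSpace

lemma mulV_sub {N : ℕ} (M : Matrix (Fin N) (Fin N) ℝ) (a b : EuclideanSpace ℝ (Fin N)) :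
    mulV M (a - b) = mulV M a - mulV M b := map_sub _ a b

lemma sub_mulV {N : ℕ} (M M' : Matrix (Fin N) (Fin N) ℝ) (a : EuclideanSpace ℝ (Fin N)) :
    mulV (M - M') a = mulV M a - mulV M' a := by
  unfold mulV; rw [map_sub]; rfl

lemma add_mulV {N : ℕ} (M M' : Matrix (Fin N) (Fin N) ℝ) (a : EuclideanSpace ℝ (Fin N)) :
    mulV (M + M') a = mulV M a + mulV M' a := by
  unfold mulV; rw [map_add]; rfl

lemma mul_mulV {N : ℕ} (M M' : Matrix (Fin N) (Fin N) ℝ) (a : EuclideanSpace ℝ (Fin N)) :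
    mulV (M * M') a = mulV M (mulV M' a) := by
  unfold mulV; rw [map_mul]; rfl

lemma norm_mulV_le {N : ℕ} (M : Matrix (Fin N) (Fin N) ℝ) (a : EuclideanSpace ℝ (Fin N)) :
    ‖mulV M a‖ ≤ sigmaMax M * ‖a‖ := (Matrix.toEuclideanCLM (𝕜 := ℝ) M).le_opNorm a

lemma sigmaMax_nonneg {N : ℕ} (M : Matrix (Fin N) (Fin N) ℝ) : 0 ≤ sigmaMax M :=
  norm_nonneg _

lemma inner_mulV_diagonal {N : ℕ} (f : Fin N → ℝ) (a b : EuclideanSpace ℝ (Fin N)) :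
    ⟪mulV (Matrix.diagonal f) a, b⟫ = ⟪a, mulV (Matrix.diagonal f) b⟫ := by
  have hstar : star (Matrix.diagonal f) = Matrix.diagonal f := by
    simp [Matrix.star_eq_conjTranspose, Matrix.diagonal_conjTranspose]
  have h2 : ContinuousLinearMap.adjoint (Matrix.toEuclideanCLM (𝕜 := ℝ) (Matrix.diagonal f))
      = Matrix.toEuclideanCLM (𝕜 := ℝ) (Matrix.diagonal f) := by
    rw [← ContinuousLinearMap.star_eq_adjoint, ← map_star, hstar]
  have := ContinuousLinearMap.adjoint_inner_right
    (Matrix.toEuclideanCLM (𝕜 := ℝ) (Matrix.diagonal f)) a b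
  rw [h2] at this
  exact this.symm

/-- preparatory lemma, part 2.
With `y = Cx + Du + d`, `φ₁ = ∇Φ¹(u) + H_diag∇Φ²(y)`, `φ₂ = x − H_x u`, and `y∞ = Hu∞ + d`
for the stationary point `u∞`:
`φ₁ᵀ(u − u∞) ≥ m_u‖u − u∞‖² + m_y‖y − y∞‖² − L_y σ_max(H_diag − H)‖y − y∞‖‖u − u∞‖
  − L_y σ_max(C)‖y − y∞‖‖φ₂‖`. -/
theorem stmt13 {N : ℕ} (hN : 0 < N)
    (A B C D : Matrix (Fin N) (Fin N) ℝ) (hinv : IsUnit (1 - A))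
    (d : EuclideanSpace ℝ (Fin N))
    (Φ1 Φ2 : EuclideanSpace ℝ (Fin N) → ℝ)
    (mu Lu my Ly : ℝ)
    (hmu : 0 < mu) (hmuLu : mu ≤ Lu) (hmy : 0 < my) (hmyLy : my ≤ Ly)
    (hΦ1diff : Differentiable ℝ Φ1) (hΦ2diff : Differentiable ℝ Φ2)
    (hΦ1mono : ∀ a b, mu * ‖a - b‖ ^ 2 ≤ ⟪gradient Φ1 a - gradient Φ1 b, a - b⟫)
    (hΦ1lip : ∀ a b, ‖gradient Φ1 a - gradient Φ1 b‖ ≤ Lu * ‖a - b‖)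
    (hΦ2mono : ∀ a b, my * ‖a - b‖ ^ 2 ≤ ⟪gradient Φ2 a - gradient Φ2 b, a - b⟫)
    (hΦ2lip : ∀ a b, ‖gradient Φ2 a - gradient Φ2 b‖ ≤ Ly * ‖a - b‖)
    (Hx H Hdiag : Matrix (Fin N) (Fin N) ℝ)
    (hHx : Hx = (1 - A)⁻¹ * B)
    (hH : H = C * Hx + D)
    (hHdiag : Hdiag = Matrix.diagonal (fun i => H i i))
    (m c : ℝ)
    (hm : m = mu + sigmaMin H ^ 2 * my)
    (hc : c = sigmaMax (H - Hdiag) * sigmaMax H * Ly)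
    (hmc : m > c)
    (uinf yinf : EuclideanSpace ℝ (Fin N))
    (huinf : gradient Φ1 uinf + mulV Hdiag (gradient Φ2 (mulV H uinf + d)) = 0)
    (hyinf : yinf = mulV H uinf + d) :
    ∀ x u : EuclideanSpace ℝ (Fin N),
      mu * ‖u - uinf‖ ^ 2 +
          my * ‖(mulV C x + mulV D u + d) - yinf‖ ^ 2 -
          Ly * sigmaMax (Hdiag - H) * ‖(mulV C x + mulV D u + d) - yinf‖ * ‖u - uinf‖ -
          Ly * sigmaMax C * ‖(mulV C x + mulV D u + d) - yinf‖ * ‖x - mulV Hx u‖ ≤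
        ⟪gradient Φ1 u + mulV Hdiag (gradient Φ2 (mulV C x + mulV D u + d)), u - uinf⟫ := by
  intro x u
  set y : EuclideanSpace ℝ (Fin N) := mulV C x + mulV D u + d with hy
  set g : EuclideanSpace ℝ (Fin N) := gradient Φ2 y - gradient Φ2 yinf with hg
  set v : EuclideanSpace ℝ (Fin N) := u - uinf with hv
  set p2 : EuclideanSpace ℝ (Fin N) := x - mulV Hx u with hp2
  -- stationarity
  have h1 : gradient Φ1 uinf = - mulV Hdiag (gradient Φ2 yinf) := by
    rw [hyinf]
    exact eq_neg_of_add_eq_zero_left huinf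
  -- decomposition of φ₁
  have hdecomp : gradient Φ1 u + mulV Hdiag (gradient Φ2 y)
      = (gradient Φ1 u - gradient Φ1 uinf) + mulV Hdiag g := by
    rw [hg, mulV_sub, h1]
    abel
  -- H v = (y - yinf) - mulV C p2
  have hHv : mulV H v = (y - yinf) - mulV C p2 := by
    have hHu : mulV H u = mulV C (mulV Hx u) + mulV D u := by
      rw [hH, add_mulV, mul_mulV]
    rw [hv, hp2, mulV_sub H, mulV_sub C, hHu, hy, hyinf]
    abel
  -- Hdiag v = H v + (Hdiag - H) v
  have hHdv : mulV Hdiag v = mulV H v + mulV (Hdiag - H) v := by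
    rw [sub_mulV]; abel
  -- inner product decomposition
  have hinner : ⟪gradient Φ1 u + mulV Hdiag (gradient Φ2 y), v⟫
      = ⟪gradient Φ1 u - gradient Φ1 uinf, v⟫
        + ⟪g, y - yinf⟫ - ⟪g, mulV C p2⟫ + ⟪g, mulV (Hdiag - H) v⟫ := by
    rw [hdecomp, inner_add_left]
    have hsym : ⟪mulV Hdiag g, v⟫ = ⟪g, mulV Hdiag v⟫ := by
      rw [hHdiag]; exact inner_mulV_diagonal _ g v
    rw [hsym, hHdv, hHv]
    simp only [inner_add_right, inner_sub_right]
    ring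
  -- bounds
  have hT1 : mu * ‖v‖ ^ 2 ≤ ⟪gradient Φ1 u - gradient Φ1 uinf, v⟫ := hΦ1mono u uinf
  have hT2 : my * ‖y - yinf‖ ^ 2 ≤ ⟪g, y - yinf⟫ := hΦ2mono y yinf
  have hglip : ‖g‖ ≤ Ly * ‖y - yinf‖ := hΦ2lip y yinf
  have hgnn : (0:ℝ) ≤ ‖g‖ := norm_nonneg _
  have hynn : (0:ℝ) ≤ ‖y - yinf‖ := norm_nonneg _
  have hvnn : (0:ℝ) ≤ ‖v‖ := norm_nonneg _
  have hp2nn : (0:ℝ) ≤ ‖p2‖ := norm_nonneg _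
  have hLy : (0:ℝ) < Ly := lt_of_lt_of_le hmy hmyLy
  -- T3 bound
  have hT3 : -(Ly * sigmaMax (Hdiag - H) * ‖y - yinf‖ * ‖v‖) ≤ ⟪g, mulV (Hdiag - H) v⟫ := by
    have hcs : |⟪g, mulV (Hdiag - H) v⟫| ≤ ‖g‖ * ‖mulV (Hdiag - H) v‖ := abs_real_inner_le_norm _ _
    have hnb : ‖mulV (Hdiag - H) v‖ ≤ sigmaMax (Hdiag - H) * ‖v‖ := norm_mulV_le _ _
    have hmnn := sigmaMax_nonneg (Hdiag - H)
    have h1 : ‖g‖ * ‖mulV (Hdiag - H) v‖ ≤ (Ly * ‖y - yinf‖) * (sigmaMax (Hdiag - H) * ‖v‖) :=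
      mul_le_mul hglip hnb (norm_nonneg _) (by positivity)
    have h2 := neg_abs_le ⟪g, mulV (Hdiag - H) v⟫
    have h3 : Ly * sigmaMax (Hdiag - H) * ‖y - yinf‖ * ‖v‖
        = (Ly * ‖y - yinf‖) * (sigmaMax (Hdiag - H) * ‖v‖) := by ring
    linarith
  -- T4 bound
  have hT4 : ⟪g, mulV C p2⟫ ≤ Ly * sigmaMax C * ‖y - yinf‖ * ‖p2‖ := by
    have hcs : |⟪g, mulV C p2⟫| ≤ ‖g‖ * ‖mulV C p2‖ := abs_real_inner_le_norm _ _
    have hnb : ‖mulV C p2‖ ≤ sigmaMax C * ‖p2‖ := norm_mulV_le _ _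
    have hmnn := sigmaMax_nonneg C
    have h1 : ‖g‖ * ‖mulV C p2‖ ≤ (Ly * ‖y - yinf‖) * (sigmaMax C * ‖p2‖) :=
      mul_le_mul hglip hnb (norm_nonneg _) (by positivity)
    have h2 := le_abs_self ⟪g, mulV C p2⟫
    have h3 : Ly * sigmaMax C * ‖y - yinf‖ * ‖p2‖
        = (Ly * ‖y - yinf‖) * (sigmaMax C * ‖p2‖) := by ring
    linarith
  rw [hinner]
  linarith
end
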